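/- There exists an axis-parallel lattice path in ℝ² with 8 steps, alternating between the two coordinate directions with step lengths (1,1,−2,3,−1,−1,2,−3) (horizontal steps 1,−2,−1,2 and vertical steps 1,3,−1,−3 interleaved), of total lattice length 14 < 2^4 = 16, whose signature tensors of orders 1, 2, and 3 all vanish. -/

import Mathlib

open scoped BigOperators
open Matrix

/-- Iterated-integral signature: `sigAux` integrates the head letter outermost. -/
noncomputable def sigAux (d : ℕ) (X : ℝ → Fin d → ℝ) : List (Fin d) → ℝ → ℝ
  | [], _ => 1
  | i :: w, t => ∫ s in (0:ℝ)..t, sigAux d X w s * deriv (fun u => X u i) s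

/-- The signature coordinate σ_{i₁⋯i_k} of the path `X`, for the word `w = [i₁,…,i_k]`. -/
noncomputable def sigEntry (d : ℕ) (X : ℝ → Fin d → ℝ) (w : List (Fin d)) : ℝ :=
  sigAux d X w.reverse 1

/-- A path `[0,1] → ℝ^d` is piecewise continuously differentiable. -/
def PiecewiseC1 (d : ℕ) (X : ℝ → Fin d → ℝ) : Prop :=
  ∃ (m : ℕ) (t : Fin (m + 1) → ℝ), StrictMono t ∧ t 0 = 0 ∧ t (Fin.last m) = 1 ∧
    ∀ i : Fin m, ContDiffOn ℝ 1 X (Set.Icc (t i.castSucc) (t i.succ))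

/-- The piecewise linear path on `[0,1]` with `m` consecutive linear steps. -/
noncomputable def plPath (d m : ℕ) (v : Fin m → Fin d → ℝ) : ℝ → Fin d → ℝ :=
  fun t j => ∑ i : Fin m, min 1 (max 0 ((m : ℝ) * t - (i : ℕ))) * v i j

/-- The 8 steps of the Lyons–Xu counterexample path: axis-parallel steps
`(1,0),(0,1),(-2,0),(0,3),(-1,0),(0,-1),(2,0),(0,-3)`. -/
noncomputable def lxSteps : Fin 8 → Fin 2 → ℝ :=
  ![![1, 0], ![0, 1], ![-2, 0], ![0, 3], ![-1, 0], ![0, -1], ![2, 0], ![0, -3]]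

/-!
On the `k`-th segment of the piecewise linear path `plPath d m v` the signature is
`S(k/m) ⊗ exp ((m t - k) • v k)`: both sides equal `S(k/m)` at the left endpoint and satisfy the
same integral recursion in `t`, which for the exponential factor reads
`d/ds (c ⊗ exp (s • x))_{i w} = x i * (c ⊗ exp (s • x))_w`.
Evaluating segment by segment gives Chen's formula `S(1) = exp (v 0) ⊗ ⋯ ⊗ exp (v (m - 1))`.
For the Lyons–Xu steps the coordinates of degree `1, 2, 3` of this product only involve the
expansion of each factor up to degree `3`, and they all cancel.
-/

open Set Finset
open scoped Nat

section MulExp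

variable {d : ℕ}

/-- The `u`-coordinate of `c ⊗ exp (s • x)` in the tensor algebra, for words in the order
used by `sigAux` (outermost integration first): `u` splits as `p ++ q` with `p` read by
`exp (s • x)`. -/
noncomputable def mulExp (x : Fin d → ℝ) (c : List (Fin d) → ℝ) (s : ℝ)
    (u : List (Fin d)) : ℝ :=
  ∑ j ∈ range (u.length + 1), s ^ j / (j ! : ℝ) * ((u.take j).map x).prod * c (u.drop j)

variable (x : Fin d → ℝ) (c : List (Fin d) → ℝ)

@[simp] lemma mulExp_nil (s : ℝ) : mulExp x c s [] = c [] := by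
  simp [mulExp]

@[simp] lemma mulExp_zero (u : List (Fin d)) : mulExp x c 0 u = c u := by
  simp [mulExp, sum_range_succ']

lemma continuous_mulExp (u : List (Fin d)) : Continuous fun s => mulExp x c s u := by
  unfold mulExp; fun_prop

lemma hasDerivAt_pow_succ_div_factorial (j : ℕ) (s : ℝ) :
    HasDerivAt (fun s : ℝ => s ^ (j + 1) / ((j + 1) ! : ℝ)) (s ^ j / (j ! : ℝ)) s := by
  refine ((hasDerivAt_pow (j + 1) s).div_const ((j + 1) ! : ℝ)).congr_deriv ?_
  have : (j ! : ℝ) ≠ 0 := by positivity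
  push_cast [Nat.factorial_succ, Nat.add_sub_cancel]
  field_simp

lemma hasDerivAt_mulExp_cons (i : Fin d) (w : List (Fin d)) (s : ℝ) :
    HasDerivAt (fun s => mulExp x c s (i :: w)) (x i * mulExp x c s w) s := by
  have hsplit : (fun s => mulExp x c s (i :: w)) = fun s => c (i :: w) + x i *
      ∑ j ∈ range (w.length + 1),
        s ^ (j + 1) / ((j + 1) ! : ℝ) * ((w.take j).map x).prod * c (w.drop j) := by
    funext s
    simp only [mulExp, List.length_cons, sum_range_succ' _ (w.length + 1), mul_sum,
      List.take_succ_cons, List.drop_succ_cons, List.map_cons, List.prod_cons]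
    rw [add_comm]
    congr 1
    · simp
    · exact sum_congr rfl fun j _ => by ring
  rw [hsplit]
  refine ((HasDerivAt.fun_sum fun j _ => ?_).const_mul (x i)).const_add _
  exact ((hasDerivAt_pow_succ_div_factorial j s).mul_const _).mul_const _

variable (a b e : Fin d)

lemma mulExp_one_singleton : mulExp x c 1 [a] = c [a] + x a * c [] := by
  simp [mulExp, sum_range_succ]

lemma mulExp_one_pair :
    mulExp x c 1 [a, b] = c [a, b] + x a * c [b] + x a * x b / 2 * c [] := by
  simp only [mulExp, sum_range_succ, sum_range_zero, List.length_cons, List.length_nil, List.take,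
    List.drop, List.map, List.prod_cons, List.prod_nil]
  simp only [Nat.factorial, Nat.cast_one, Nat.succ_eq_add_one]
  push_cast
  ring

lemma mulExp_one_triple : mulExp x c 1 [a, b, e] =
    c [a, b, e] + x a * c [b, e] + x a * x b / 2 * c [e] + x a * x b * x e / 6 * c [] := by
  simp only [mulExp, sum_range_succ, sum_range_zero, List.length_cons, List.length_nil, List.take,
    List.drop, List.map, List.prod_cons, List.prod_nil]
  simp only [Nat.factorial, Nat.cast_one, Nat.succ_eq_add_one]
  push_cast
  ring

end MulExp

section PiecewiseLinear

variable {d m : ℕ} (v : Fin m → Fin d → ℝ)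

lemma min_one_max_zero_sub_eq {s : ℝ} {k : ℕ} (hs : s ∈ Icc (k : ℝ) (k + 1)) (i : ℕ) :
    min 1 (max 0 (s - i)) = if i < k then 1 else if i = k then s - k else 0 := by
  obtain ⟨h₁, h₂⟩ := hs
  rcases lt_trichotomy i k with h | rfl | h
  · have : (i : ℝ) + 1 ≤ k := by exact_mod_cast h
    simp [h, show (1 : ℝ) ≤ s - i by linarith]
  · simp [show s - i ≤ 1 by linarith, h₁]
  · have : (k : ℝ) + 1 ≤ i := by exact_mod_cast h
    simp [h.ne', h.not_gt, show s - i ≤ 0 by linarith]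

lemma plPath_apply_of_mem_Icc (k : Fin m) {t : ℝ} (ht : t ∈ Icc ((k : ℝ) / m) ((k + 1) / m))
    (j : Fin d) :
    plPath d m v t j = (∑ i with i < k, v i j) + (m * t - k) * v k j := by
  have hm : (0 : ℝ) < m := by exact_mod_cast k.pos
  have hs : (m : ℝ) * t ∈ Icc (k : ℝ) (k + 1) := by
    obtain ⟨h₁, h₂⟩ := ht
    constructor
    · rwa [div_le_iff₀ hm, mul_comm] at h₁
    · rwa [le_div_iff₀ hm, mul_comm] at h₂
  have hterm : ∀ i : Fin m, min 1 (max 0 (m * t - (i : ℕ))) * v i j =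
      (if i < k then v i j else 0) + if i = k then (m * t - k) * v i j else 0 := by
    intro i
    rw [min_one_max_zero_sub_eq hs]
    rcases lt_trichotomy i k with h | rfl | h
    · simp [h, h.ne, Fin.lt_def.mp h]
    · simp
    · simp [h.ne', h.not_gt, Fin.lt_def.not.mp h.not_gt, Fin.val_ne_of_ne h.ne']
  simp only [plPath, hterm, sum_add_distrib, sum_ite_eq', Finset.mem_univ, if_true, sum_ite,
    sum_const_zero, add_zero]

lemma hasDerivAt_plPath_of_mem_Ioo (k : Fin m) {t : ℝ}
    (ht : t ∈ Ioo ((k : ℝ) / m) ((k + 1) / m)) (j : Fin d) :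
    HasDerivAt (fun u => plPath d m v u j) (m * v k j) t := by
  have hlin : HasDerivAt (fun u => (∑ i with i < k, v i j) + (m * u - k) * v k j)
      (m * v k j) t := by
    simpa using (((hasDerivAt_id t).const_mul (m : ℝ)).sub_const (k : ℝ)).mul_const (v k j)
      |>.const_add (∑ i with i < k, v i j)
  refine hlin.congr_of_eventuallyEq (Filter.mem_of_superset (Ioo_mem_nhds ht.1 ht.2) ?_)
  exact fun u hu => plPath_apply_of_mem_Icc v k (Ioo_subset_Icc_self hu) j

end PiecewiseLinear

section Chen

open MeasureTheory intervalIntegral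

variable {d m : ℕ} (v : Fin m → Fin d → ℝ)

theorem sigAux_plPath_eq_mulExp (u : List (Fin d)) (k : Fin m) {t : ℝ}
    (ht : t ∈ Icc ((k : ℝ) / m) ((k + 1) / m)) :
    sigAux d (plPath d m v) u t =
      mulExp (v k) (fun q => sigAux d (plPath d m v) q (k / m)) (m * t - k) u := by
  induction u generalizing k t with
  | nil => simp [sigAux]
  | cons i w ih =>
    set X := plPath d m v
    set c : Fin m → List (Fin d) → ℝ := fun k q => sigAux d X q (k / m)
    set g : ℝ → ℝ := fun r => sigAux d X w r * deriv (fun u => X u i) r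
    set G : Fin m → ℝ → ℝ := fun k r => m * v k i * mulExp (v k) (c k) (m * r - k) w
    have hG : ∀ k, Continuous (G k) := fun k =>
      continuous_const.mul ((continuous_mulExp (v k) (c k) w).comp (by fun_prop))
    have hF : ∀ k r, HasDerivAt (fun r => mulExp (v k) (c k) (m * r - k) (i :: w)) (G k r) r := by
      intro k r
      refine ((hasDerivAt_mulExp_cons (v k) (c k) i w _).comp r
        (((hasDerivAt_id r).const_mul (m : ℝ)).sub_const (k : ℝ))).congr_deriv ?_
      simp only [id, G]
      ring
    have hgG : ∀ (k : Fin m) {τ}, τ ∈ Icc ((k : ℝ) / m) ((k + 1) / m) →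
        EqOn g (G k) (uIoo (k / m) τ) := by
      intro k τ hτ r hr
      rw [uIoo_of_le hτ.1] at hr
      have hr' : r ∈ Ioo ((k : ℝ) / m) ((k + 1) / m) := ⟨hr.1, hr.2.trans_le hτ.2⟩
      have hX : deriv (fun u => X u i) r = m * v k i :=
        (hasDerivAt_plPath_of_mem_Ioo v k hr' i).deriv
      simp only [g, G, ih k (Ioo_subset_Icc_self hr'), hX, c]
      ring
    have hint : ∀ (k : Fin m) {τ}, τ ∈ Icc ((k : ℝ) / m) ((k + 1) / m) →
        IntervalIntegrable g volume (k / m) τ := fun k τ hτ =>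
      ((hG k).intervalIntegrable _ _).congr_uIoo (hgG k hτ).symm
    have hintegral : ∀ (k : Fin m) {τ}, τ ∈ Icc ((k : ℝ) / m) ((k + 1) / m) →
        ∫ r in (k / m)..τ, g r = mulExp (v k) (c k) (m * τ - k) (i :: w) - c k (i :: w) := by
      intro k τ hτ
      have hm : (m : ℝ) ≠ 0 := by exact_mod_cast k.pos.ne'
      rw [integral_congr_uIoo (hgG k hτ),
        integral_eq_sub_of_hasDerivAt (fun r _ => hF k r) ((hG k).intervalIntegrable _ _),
        mul_div_cancel₀ _ hm, sub_self, mulExp_zero]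
    have hprefix : IntervalIntegrable g volume 0 (k / m) := by
      have := IntervalIntegrable.trans_iterate (a := fun n : ℕ => (n : ℝ) / m) (n := k)
        fun n hn => by
          simpa using
            hint ⟨n, hn.trans k.isLt⟩ (τ := (n + 1) / m) ⟨by gcongr; simp, le_rfl⟩
      simpa using this
    show ∫ r in (0 : ℝ)..t, g r = _
    rw [← integral_add_adjacent_intervals hprefix (hint k ht), hintegral k ht]
    exact add_sub_cancel _ _

theorem sigAux_plPath_natCast_div {k : ℕ} (hk : k ≤ m) :
    (fun u => sigAux d (plPath d m v) u (k / m)) =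
      ((List.ofFn v).take k).foldl (fun c x => mulExp x c 1) fun u => if u = [] then 1 else 0 := by
  induction k with
  | zero =>
    funext u
    cases u <;> simp [sigAux]
  | succ k ih =>
    have hk' : k < m := hk
    have hm : (m : ℝ) ≠ 0 := by exact_mod_cast (k.zero_le.trans_lt hk').ne'
    rw [List.take_add_one, List.foldl_append, ← ih hk'.le, List.getElem?_ofFn, dif_pos hk']
    funext u
    have ht : ((k : ℝ) + 1) / m ∈ Icc ((k : ℝ) / m) ((k + 1) / m) :=
      ⟨by gcongr; simp, le_rfl⟩
    push_cast
    rw [sigAux_plPath_eq_mulExp v u ⟨k, hk'⟩ ht, mul_div_cancel₀ _ hm, add_sub_cancel_left]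
    simp

theorem sigEntry_plPath (w : List (Fin d)) :
    sigEntry d (plPath d m v) w =
      (List.ofFn v).foldl (fun c x => mulExp x c 1) (fun u => if u = [] then 1 else 0)
        w.reverse := by
  rcases Nat.eq_zero_or_pos m with rfl | hm
  · cases h : w.reverse <;> simp [sigEntry, sigAux, plPath, h]
  · have := congrFun (sigAux_plPath_natCast_div v le_rfl) w.reverse
    rwa [List.take_of_length_le (by simp), div_self (by positivity)] at this

end Chen

lemma ofFn_lxSteps : List.ofFn lxSteps =
    [![1, 0], ![0, 1], ![-2, 0], ![0, 3], ![-1, 0], ![0, -1], ![2, 0], ![0, -3]] := by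
  simp [List.ofFn_succ, lxSteps]

lemma foldl_mulExp_lxSteps_eq_zero (u : List (Fin 2)) (h₁ : 1 ≤ u.length)
    (h₃ : u.length ≤ 3) :
    (List.ofFn lxSteps).foldl (fun c x => mulExp x c 1) (fun u => if u = [] then 1 else 0) u =
      0 := by
  rw [ofFn_lxSteps]
  simp only [List.foldl_cons, List.foldl_nil]
  rcases u with _ | ⟨a, _ | ⟨b, _ | ⟨e, _ | ⟨_, _⟩⟩⟩⟩
  · simp at h₁
  · fin_cases a <;> norm_num [mulExp_one_singleton]
  · fin_cases a <;> fin_cases b <;>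
      norm_num [mulExp_one_singleton, mulExp_one_pair, List.cons_ne_nil]
  · fin_cases a <;> fin_cases b <;> fin_cases e <;>
      norm_num [mulExp_one_singleton, mulExp_one_pair, mulExp_one_triple, List.cons_ne_nil]
  · simp only [List.length_cons] at h₃
    omega

/-- There is an axis-parallel lattice path in the plane with 8 alternating steps of
lengths `1,1,-2,3,-1,-1,2,-3`, hence of total lattice length `14 < 2⁴ = 16`, whose
signature tensors of orders 1, 2 and 3 all vanish. -/
theorem lyons_xu_counterexample :
    (∀ i : Fin 8, lxSteps i 0 = 0 ∨ lxSteps i 1 = 0) ∧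
    (∑ i : Fin 8, (|lxSteps i 0| + |lxSteps i 1|)) = 14 ∧
    (14 : ℝ) < 2 ^ 4 ∧
    ∀ w : List (Fin 2), 1 ≤ w.length → w.length ≤ 3 →
      sigEntry 2 (plPath 2 8 lxSteps) w = 0 := by
  refine ⟨?_, ?_, by norm_num, fun w h₁ h₃ => ?_⟩
  · intro i
    fin_cases i <;> simp [lxSteps]
  · norm_num [Fin.sum_univ_succ, lxSteps]
  · rw [sigEntry_plPath]
    exact foldl_mulExp_lxSteps_eq_zero _ (by simpa using h₁) (by simpa using h₃)
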